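/- Consider t₁(s) = 7 + 3^{3−2s} − 2^{5−2s} as a function of s ∈ (0, 3/2). There exists a unique s₀ ∈ (0, 1/2) with t₁(s₀) = 0; moreover t₁(1/2) = 0, t₁(s) > 0 for all s ∈ (0, s₀) ∪ (1/2, 3/2), and t₁(s) < 0 for all s ∈ (s₀, 1/2). -/

import Mathlib

/-- `t₁(s) = 7 + 3^(3-2s) - 2^(5-2s)`. -/
noncomputable def t1 (s : ℝ) : ℝ := 7 + (3 : ℝ) ^ (3 - 2 * s) - (2 : ℝ) ^ (5 - 2 * s)

/-! Writing `u = 1 - 2s`, we have `t₁(s) = 7 + 9·3ᵘ - 16·2ᵘ`. For `u > 0` the second derivative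
`36 (log 3)² 3ᵘ - 64 (log 2)² 2ᵘ` is positive because `2⁴ < 3³`, so `t₁` is strictly convex on
`s ≤ 1/2`; for `u < 0` the first derivative `32 log 2 · 2ᵘ - 18 log 3 · 3ᵘ` is positive because
`3⁹ < 2¹⁶`, so `t₁` increases on `s ≥ 1/2`. Since `t₁(0) = 2`, `t₁(1/4) = 7 + 9√3 - 16√2 < 0` and
`t₁(1/2) = 0`, strict convexity leaves room for exactly one more zero `s₀ ∈ (0, 1/4)` and
forces the sign pattern on `[0, 1/2]`. -/

open Real Set

section StrictConvexZeros

variable {f : ℝ → ℝ} {D : Set ℝ} {x y z : ℝ}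

theorem StrictConvexOn.neg_of_zeros (hf : StrictConvexOn ℝ D f) (hx : x ∈ D) (hz : z ∈ D)
    (hxy : x < y) (hyz : y < z) (hfx : f x = 0) (hfz : f z = 0) : f y < 0 := by
  have := hf.lt_on_openSegment hx hz (hxy.trans hyz).ne
    (by rw [openSegment_eq_Ioo (hxy.trans hyz)]; exact ⟨hxy, hyz⟩)
  rwa [hfx, hfz, max_self] at this

theorem StrictConvexOn.pos_of_lt_of_zeros (hf : StrictConvexOn ℝ D f) (hx : x ∈ D) (hz : z ∈ D)
    (hxy : x < y) (hyz : y < z) (hfy : f y = 0) (hfz : f z = 0) : 0 < f x := by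
  have := hf.lt_on_openSegment hx hz (hxy.trans hyz).ne
    (by rw [openSegment_eq_Ioo (hxy.trans hyz)]; exact ⟨hxy, hyz⟩)
  rwa [hfy, hfz, lt_max_iff, lt_self_iff_false, or_false] at this

end StrictConvexZeros

theorem four_mul_log_two_lt_three_mul_log_three : 4 * log 2 < 3 * log 3 := by
  have := log_lt_log (by norm_num) (show (2 : ℝ) ^ 4 < 3 ^ 3 by norm_num)
  rwa [log_pow, log_pow, Nat.cast_ofNat, Nat.cast_ofNat] at this

theorem nine_mul_log_three_lt_sixteen_mul_log_two : 9 * log 3 < 16 * log 2 := by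
  have := log_lt_log (by norm_num) (show (3 : ℝ) ^ 9 < 2 ^ 16 by norm_num)
  rwa [log_pow, log_pow, Nat.cast_ofNat, Nat.cast_ofNat] at this

theorem hasDerivAt_rpow_one_sub_two_mul {a : ℝ} (ha : 0 < a) (s : ℝ) :
    HasDerivAt (fun s : ℝ => a ^ (1 - 2 * s)) (-2 * log a * a ^ (1 - 2 * s)) s := by
  have h : HasDerivAt (fun s : ℝ => 1 - 2 * s) (-2) s := by
    simpa using ((hasDerivAt_id s).const_mul 2).const_sub 1
  convert h.const_rpow ha using 1
  ring

theorem t1_eq (s : ℝ) : t1 s = 7 + 9 * (3 : ℝ) ^ (1 - 2 * s) - 16 * (2 : ℝ) ^ (1 - 2 * s) := by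
  rw [t1, show 3 - 2 * s = 2 + (1 - 2 * s) by ring, show 5 - 2 * s = 4 + (1 - 2 * s) by ring,
    rpow_add (by norm_num), rpow_add (by norm_num)]
  norm_num

theorem hasDerivAt_t1 (s : ℝ) :
    HasDerivAt t1 (32 * log 2 * (2 : ℝ) ^ (1 - 2 * s) - 18 * log 3 * (3 : ℝ) ^ (1 - 2 * s)) s := by
  rw [funext t1_eq]
  exact ((((hasDerivAt_rpow_one_sub_two_mul three_pos s).const_mul 9).const_add 7).sub
    ((hasDerivAt_rpow_one_sub_two_mul two_pos s).const_mul 16)).congr_deriv (by ring)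

theorem continuous_t1 : Continuous t1 :=
  continuous_iff_continuousAt.2 fun s => (hasDerivAt_t1 s).continuousAt

theorem iterate_deriv_two_t1 (s : ℝ) :
    deriv^[2] t1 s =
      36 * log 3 ^ 2 * (3 : ℝ) ^ (1 - 2 * s) - 64 * log 2 ^ 2 * (2 : ℝ) ^ (1 - 2 * s) := by
  rw [Function.iterate_succ_apply', Function.iterate_one, funext fun s => (hasDerivAt_t1 s).deriv]
  exact (((hasDerivAt_rpow_one_sub_two_mul two_pos s).const_mul (32 * log 2)).sub
    ((hasDerivAt_rpow_one_sub_two_mul three_pos s).const_mul (18 * log 3))).deriv.trans (by ring)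

theorem strictConvexOn_t1 : StrictConvexOn ℝ (Iic (1 / 2)) t1 := by
  refine strictConvexOn_of_deriv2_pos (convex_Iic _) continuous_t1.continuousOn fun s hs => ?_
  rw [interior_Iic] at hs
  have hu : 0 < 1 - 2 * s := by linarith [mem_Iio.1 hs]
  rw [iterate_deriv_two_t1, sub_pos]
  calc 64 * log 2 ^ 2 * (2 : ℝ) ^ (1 - 2 * s) = 4 * (4 * log 2) ^ 2 * 2 ^ (1 - 2 * s) := by ring
    _ < 4 * (3 * log 3) ^ 2 * 2 ^ (1 - 2 * s) := by
      have := four_mul_log_two_lt_three_mul_log_three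
      have := log_pos (by norm_num : (1 : ℝ) < 2)
      gcongr
    _ < 4 * (3 * log 3) ^ 2 * 3 ^ (1 - 2 * s) := by
      have := log_pos (by norm_num : (1 : ℝ) < 3)
      exact mul_lt_mul_of_pos_left (rpow_lt_rpow (by norm_num) (by norm_num) hu) (by positivity)
    _ = 36 * log 3 ^ 2 * 3 ^ (1 - 2 * s) := by ring

theorem strictMonoOn_t1 : StrictMonoOn t1 (Ici (1 / 2)) := by
  refine strictMonoOn_of_deriv_pos (convex_Ici _) continuous_t1.continuousOn fun s hs => ?_
  rw [interior_Ici] at hs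
  have hu : 1 - 2 * s < 0 := by linarith [mem_Ioi.1 hs]
  rw [(hasDerivAt_t1 s).deriv, sub_pos]
  calc 18 * log 3 * (3 : ℝ) ^ (1 - 2 * s) < 18 * log 3 * 2 ^ (1 - 2 * s) := by
        have := log_pos (by norm_num : (1 : ℝ) < 3)
        exact mul_lt_mul_of_pos_left (rpow_lt_rpow_of_neg (by norm_num) (by norm_num) hu)
          (by positivity)
    _ = 2 * (9 * log 3) * 2 ^ (1 - 2 * s) := by ring
    _ < 2 * (16 * log 2) * 2 ^ (1 - 2 * s) := by
        gcongr 2 * ?_ * _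
        exact nine_mul_log_three_lt_sixteen_mul_log_two
    _ = 32 * log 2 * 2 ^ (1 - 2 * s) := by ring

theorem t1_zero : t1 0 = 2 := by
  norm_num [t1_eq]

theorem t1_one_half : t1 (1 / 2) = 0 := by
  norm_num [t1_eq]

theorem t1_one_quarter_neg : t1 (1 / 4) < 0 := by
  have h3 : √3 < 1.7321 := (sqrt_lt' (by norm_num)).2 (by norm_num)
  have h2 : 1.4142 < √2 := (lt_sqrt (by norm_num)).2 (by norm_num)
  rw [t1_eq, show (1 : ℝ) - 2 * (1 / 4) = 1 / 2 by norm_num, ← sqrt_eq_rpow, ← sqrt_eq_rpow]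
  linarith

theorem stmt5 :
    ∃ s₀ ∈ Set.Ioo (0 : ℝ) (1 / 2),
      t1 s₀ = 0 ∧ (∀ s ∈ Set.Ioo (0 : ℝ) (1 / 2), t1 s = 0 → s = s₀) ∧
      t1 (1 / 2) = 0 ∧
      (∀ s ∈ Set.Ioo (0 : ℝ) s₀ ∪ Set.Ioo (1 / 2 : ℝ) (3 / 2), 0 < t1 s) ∧
      (∀ s ∈ Set.Ioo s₀ (1 / 2 : ℝ), t1 s < 0) := by
  obtain ⟨s₀, ⟨hs₀_pos, hs₀_lt⟩, hs₀⟩ : ∃ s₀ ∈ Ioo (0 : ℝ) (1 / 4), t1 s₀ = 0 :=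
    intermediate_value_Ioo' (by norm_num) continuous_t1.continuousOn
      ⟨t1_one_quarter_neg, by rw [t1_zero]; norm_num⟩
  have hs₀_mem : s₀ ∈ Iic (1 / 2) := by rw [mem_Iic]; linarith
  have hpos : ∀ s ∈ Ioo 0 s₀, 0 < t1 s := fun s hs =>
    strictConvexOn_t1.pos_of_lt_of_zeros (by rw [mem_Iic]; linarith [hs.2]) self_mem_Iic hs.2
      (by linarith) hs₀ t1_one_half
  have hneg : ∀ s ∈ Ioo s₀ (1 / 2), t1 s < 0 := fun s hs =>
    strictConvexOn_t1.neg_of_zeros hs₀_mem self_mem_Iic hs.1 hs.2 hs₀ t1_one_half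
  refine ⟨s₀, ⟨hs₀_pos, by linarith⟩, hs₀, fun s hs hts => ?_, t1_one_half, ?_, hneg⟩
  · rcases lt_trichotomy s s₀ with h | h | h
    · exact absurd hts (hpos s ⟨hs.1, h⟩).ne'
    · exact h
    · exact absurd hts (hneg s ⟨h, hs.2⟩).ne
  · rintro s (hs | hs)
    · exact hpos s hs
    · exact t1_one_half ▸ strictMonoOn_t1 self_mem_Ici hs.1.le hs.1
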